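/- arXiv:1404.5545 — 2 statements merged into one kernel-verified Lean document; each statement's English description precedes it below -/
import Mathlib

section
/- Fix p ≥ 1 and f : [n]^d → ℝ, and let f_ext = f ∘ Φ : [N]^d → ℝ. Then: (i) for every g ∈ P(B), with g_ext = g ∘ Φ, one has Σ_{x∈[n]^d} μ_D(x)·|f(x) − g(x)|^p = (1/N^d)·Σ_{v∈[N]^d} |f_ext(v) − g_ext(v)|^p; and (ii) the infimum over g ∈ P(B) of Σ_{x∈[n]^d} μ_D(x)·|f(x) − g(x)|^p equals the infimum over all h : [N]^d → ℝ satisfying h(v) − h(w) ≤ m_ext(v,w) for all v,w ∈ [N]^d of (1/N^d)·Σ_{v∈[N]^d} |f_ext(v) − h(v)|^p, where m_ext(v,w) = m(Φ(v), Φ(w)). -/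
/-!
`Φ` pushes the uniform measure on `[N]^d` forward to `μ_D`: the fibre of `Φ` over `x` is a box
with `∏ r, q_r(x_r)` points. This gives (i) for every function, not only for `g ∈ P(B)`.

For (ii), `g ↦ g ∘ Φ` maps `P(B)` onto the `m_ext`-Lipschitz functions. A function in `P(B)`
satisfies `g x - g y ≤ m(x, y)` by walking from `x` to `y` one coordinate at a time. Conversely, an
`m_ext`-Lipschitz `h` is constant on the fibres of `Φ` because `m(x, x) = 0`, so `h = g ∘ Φ` with
`g = h ∘ σ` for the section `σ x = (Σ_{j ≤ x_r} q_r(j))_r` of `Φ`; and `g ∈ P(B)` because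
`m(x + e_r, x) = u_r(x_r)` and `m(x, x + e_r) = -l_r(x_r)`.
-/

open Finset
open scoped Classical

/-- Membership of a point in the hypergrid `[n]^d = {1,…,n}^d`. -/
def inGrid (n d : ℕ) (x : Fin d → ℕ) : Prop := ∀ r : Fin d, 1 ≤ x r ∧ x r ≤ n

/-- The hypergrid `[n]^d = {1,…,n}^d` as a finite set of points. -/
def gridF (n d : ℕ) : Finset (Fin d → ℕ) :=
  Finset.Icc (fun _ => 1) (fun _ => n)

/-- The quasimetric associated to a bounding family `(l, u)`. -/
def qm (d : ℕ) (l u : Fin d → ℕ → ℝ) (x y : Fin d → ℕ) : ℝ :=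
  ∑ r : Fin d, ((∑ t ∈ Finset.Ico (y r) (x r), u r t) - ∑ t ∈ Finset.Ico (x r) (y r), l r t)

/-- `g` belongs to the bounded-derivative property `P(B)` for the bounding family `(l,u)`. -/
def memP (n d : ℕ) (l u : Fin d → ℕ → ℝ) (g : (Fin d → ℕ) → ℝ) : Prop :=
  ∀ r : Fin d, ∀ x : Fin d → ℕ, inGrid n d x → x r + 1 ≤ n →
    l r (x r) ≤ g (Function.update x r (x r + 1)) - g x ∧
    g (Function.update x r (x r + 1)) - g x ≤ u r (x r)

/-- `phi q t` is the unique `ℓ` with `Σ_{j<ℓ} q j < t ≤ Σ_{j≤ℓ} q j`. -/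
noncomputable def phi (q : ℕ → ℕ) (t : ℕ) : ℕ :=
  sInf {ℓ : ℕ | t ≤ ∑ j ∈ Finset.Icc 1 ℓ, q j}

/-- The map `Φ : [N]^d → [n]^d`. -/
noncomputable def Phi (d : ℕ) (q : Fin d → ℕ → ℕ) (v : Fin d → ℕ) : Fin d → ℕ :=
  fun r => phi (q r) (v r)

/-- The extended quasimetric `m_ext(v,w) = m(Φ(v),Φ(w))` on `[N]^d`. -/
noncomputable def mext (d : ℕ) (l u : Fin d → ℕ → ℝ) (q : Fin d → ℕ → ℕ)
    (v w : Fin d → ℕ) : ℝ :=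
  qm d l u (Phi d q v) (Phi d q w)

def cumSum (q : ℕ → ℕ) (ℓ : ℕ) : ℕ := ∑ j ∈ Icc 1 ℓ, q j

section cumSum

variable {q : ℕ → ℕ} {t ℓ m : ℕ}

lemma cumSum_mono (q : ℕ → ℕ) : Monotone (cumSum q) :=
  fun _ _ h => sum_le_sum_of_subset (Icc_subset_Icc_right h)

@[simp] lemma cumSum_zero : cumSum q 0 = 0 := rfl

lemma cumSum_pred_add (hℓ : 1 ≤ ℓ) : cumSum q (ℓ - 1) + q ℓ = cumSum q ℓ := by
  obtain ⟨k, rfl⟩ := Nat.exists_eq_add_of_le' hℓ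
  exact (sum_Icc_succ_top (by omega) q).symm

lemma phi_le_iff (ht : t ≤ cumSum q m) : phi q t ≤ ℓ ↔ t ≤ cumSum q ℓ :=
  ⟨fun h => (Nat.sInf_mem (s := {ℓ | t ≤ cumSum q ℓ}) ⟨m, ht⟩).trans (cumSum_mono q h),
    fun h => Nat.sInf_le h⟩

lemma phi_eq_iff (ht : t ≤ cumSum q m) (hℓ : 1 ≤ ℓ) :
    phi q t = ℓ ↔ cumSum q (ℓ - 1) < t ∧ t ≤ cumSum q ℓ := by
  rw [← phi_le_iff ht, ← not_le, ← phi_le_iff ht]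
  omega

lemma one_le_phi (ht₀ : 1 ≤ t) (ht : t ≤ cumSum q m) : 1 ≤ phi q t := by
  by_contra! h
  have : t ≤ cumSum q 0 := (phi_le_iff ht).1 (by omega)
  rw [cumSum_zero] at this
  omega

lemma phi_cumSum (hℓ : 1 ≤ ℓ) (hq : 0 < q ℓ) : phi q (cumSum q ℓ) = ℓ := by
  rw [phi_eq_iff le_rfl hℓ, ← cumSum_pred_add hℓ]
  omega

lemma phi_mem_Icc (ht : t ∈ Icc 1 (cumSum q m)) : phi q t ∈ Icc 1 m := by
  rw [mem_Icc] at ht ⊢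
  exact ⟨one_le_phi ht.1 ht.2, (phi_le_iff ht.2).2 ht.2⟩

lemma filter_phi_eq (hℓ₁ : 1 ≤ ℓ) (hℓ : ℓ ≤ m) :
    {t ∈ Icc 1 (cumSum q m) | phi q t = ℓ} = Ioc (cumSum q (ℓ - 1)) (cumSum q ℓ) := by
  ext t
  simp only [mem_filter, mem_Icc, mem_Ioc]
  have := cumSum_mono q hℓ
  constructor
  · rintro ⟨⟨_, ht⟩, h⟩
    exact (phi_eq_iff ht hℓ₁).1 h
  · rintro ⟨h₁, h₂⟩
    exact ⟨⟨by omega, by omega⟩, (phi_eq_iff h₂ hℓ₁).2 ⟨h₁, h₂⟩⟩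

lemma card_filter_phi_eq (hℓ₁ : 1 ≤ ℓ) (hℓ : ℓ ≤ m) :
    #{t ∈ Icc 1 (cumSum q m) | phi q t = ℓ} = q ℓ := by
  rw [filter_phi_eq hℓ₁ hℓ, Nat.card_Ioc, ← cumSum_pred_add hℓ₁]
  omega

end cumSum

lemma mem_gridF {n d : ℕ} {x : Fin d → ℕ} : x ∈ gridF n d ↔ inGrid n d x := by
  simp [gridF, inGrid, Pi.le_def, forall_and]

section Phi

variable {n d N : ℕ} {q : Fin d → ℕ → ℕ}

lemma Phi_mem_gridF (hsum : ∀ r, cumSum (q r) n = N) {v : Fin d → ℕ} (hv : v ∈ gridF N d) :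
    Phi d q v ∈ gridF n d := by
  rw [mem_gridF] at hv ⊢
  intro r
  exact mem_Icc.1 (phi_mem_Icc (by rw [hsum r]; exact mem_Icc.2 (hv r)))

lemma filter_Phi_eq (hsum : ∀ r, cumSum (q r) n = N) (x : Fin d → ℕ) :
    {v ∈ gridF N d | Phi d q v = x}
      = Fintype.piFinset fun r => {t ∈ Icc 1 (cumSum (q r) n) | phi (q r) t = x r} := by
  ext v
  simp [mem_gridF, inGrid, Phi, funext_iff, hsum, forall_and]

lemma card_filter_Phi_eq (hsum : ∀ r, cumSum (q r) n = N) {x : Fin d → ℕ} (hx : x ∈ gridF n d) :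
    #{v ∈ gridF N d | Phi d q v = x} = ∏ r, q r (x r) := by
  rw [filter_Phi_eq hsum, Fintype.card_piFinset]
  rw [mem_gridF] at hx
  exact prod_congr rfl fun r _ => card_filter_phi_eq (hx r).1 (hx r).2

lemma sum_gridF_mul_eq_sum_comp_Phi (hsum : ∀ r, cumSum (q r) n = N)
    (F : (Fin d → ℕ) → ℝ) :
    ∑ x ∈ gridF n d, (∏ r, ((q r (x r) : ℝ) / N)) * F x
      = 1 / (N : ℝ) ^ d * ∑ v ∈ gridF N d, F (Phi d q v) := by
  rw [← sum_fiberwise_of_maps_to' (fun v => Phi_mem_gridF hsum) F, mul_sum]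
  refine sum_congr rfl fun x hx => ?_
  rw [sum_const, card_filter_Phi_eq hsum hx, prod_div_distrib, prod_const, card_univ,
    Fintype.card_fin, nsmul_eq_mul]
  push_cast
  ring

end Phi

lemma inGrid_update {n d : ℕ} {x : Fin d → ℕ} (hx : inGrid n d x) (r : Fin d) {b : ℕ}
    (hb₁ : 1 ≤ b) (hb : b ≤ n) : inGrid n d (Function.update x r b) := by
  intro r'
  rcases eq_or_ne r' r with rfl | hne
  · simpa using ⟨hb₁, hb⟩
  · simpa [hne] using hx r'

lemma inGrid_piecewise {n d : ℕ} {x y : Fin d → ℕ} (hx : inGrid n d x) (hy : inGrid n d y)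
    (S : Finset (Fin d)) : inGrid n d (S.piecewise y x) := by
  intro r
  by_cases hr : r ∈ S
  · simpa [hr] using hy r
  · simpa [hr] using hx r

namespace memP

variable {n d : ℕ} {l u : Fin d → ℕ → ℝ} {g : (Fin d → ℕ) → ℝ}

lemma sum_Ico_le_sub_le_sum_Ico (hg : memP n d l u g) {z : Fin d → ℕ} (hz : inGrid n d z)
    (r : Fin d) {a b : ℕ} (ha : 1 ≤ a) (hab : a ≤ b) (hb : b ≤ n) :
    ∑ t ∈ Ico a b, l r t ≤ g (Function.update z r b) - g (Function.update z r a) ∧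
      g (Function.update z r b) - g (Function.update z r a) ≤ ∑ t ∈ Ico a b, u r t := by
  induction b, hab using Nat.le_induction with
  | base => simp
  | succ b hab ih =>
    obtain ⟨ihl, ihu⟩ := ih (by omega)
    have hstep := hg r (Function.update z r b) (inGrid_update hz r (by omega) (by omega))
      (by simpa using hb)
    simp only [Function.update_self, Function.update_idem] at hstep
    rw [sum_Ico_succ_top hab, sum_Ico_succ_top hab]
    constructor <;> linarith [hstep.1, hstep.2]

lemma sub_update_le (hg : memP n d l u g) {z : Fin d → ℕ} (hz : inGrid n d z) (r : Fin d)
    {b : ℕ} (hb₁ : 1 ≤ b) (hb : b ≤ n) :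
    g z - g (Function.update z r b) ≤
      (∑ t ∈ Ico b (z r), u r t) - ∑ t ∈ Ico (z r) b, l r t := by
  have hz' := Function.update_eq_self r z
  rcases le_total (z r) b with hzb | hbz
  · have := (hg.sum_Ico_le_sub_le_sum_Ico hz r (hz r).1 hzb hb).1
    rw [hz'] at this
    rw [Ico_eq_empty_of_le hzb, sum_empty]
    linarith
  · have := (hg.sum_Ico_le_sub_le_sum_Ico hz r hb₁ hbz (hz r).2).2
    rw [hz'] at this
    rw [Ico_eq_empty_of_le hbz, sum_empty]
    linarith

lemma sub_piecewise_le (hg : memP n d l u g) {x y : Fin d → ℕ} (hx : inGrid n d x)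
    (hy : inGrid n d y) (S : Finset (Fin d)) :
    g x - g (S.piecewise y x) ≤
      ∑ r ∈ S, ((∑ t ∈ Ico (y r) (x r), u r t) - ∑ t ∈ Ico (x r) (y r), l r t) := by
  induction S using Finset.induction with
  | empty => simp
  | insert r S hrS ih =>
    have hstep := hg.sub_update_le (inGrid_piecewise hx hy S) r (hy r).1 (hy r).2
    rw [piecewise_eq_of_notMem _ _ _ hrS] at hstep
    rw [piecewise_insert, sum_insert hrS]
    linarith

lemma sub_le_qm (hg : memP n d l u g) {x y : Fin d → ℕ} (hx : inGrid n d x)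
    (hy : inGrid n d y) : g x - g y ≤ qm d l u x y := by
  have := hg.sub_piecewise_le hx hy univ
  rwa [piecewise_univ] at this

end memP

section quasimetric

variable {d : ℕ} {l u : Fin d → ℕ → ℝ}

@[simp] lemma qm_self (x : Fin d → ℕ) : qm d l u x x = 0 := by
  simp [qm]

lemma qm_eq_single (x y : Fin d → ℕ) (r : Fin d) (h : ∀ r' ≠ r, x r' = y r') :
    qm d l u x y = (∑ t ∈ Ico (y r) (x r), u r t) - ∑ t ∈ Ico (x r) (y r), l r t :=
  Fintype.sum_eq_single r fun r' hr' => by simp [h r' hr']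

lemma qm_update_succ_left (x : Fin d → ℕ) (r : Fin d) :
    qm d l u (Function.update x r (x r + 1)) x = u r (x r) := by
  rw [qm_eq_single _ _ r fun r' hr' => Function.update_of_ne hr' _ _]
  simp

lemma qm_update_succ_right (x : Fin d → ℕ) (r : Fin d) :
    qm d l u x (Function.update x r (x r + 1)) = -l r (x r) := by
  rw [qm_eq_single _ _ r fun r' hr' => (Function.update_of_ne hr' _ _).symm]
  simp

end quasimetric

def PhiSection (d : ℕ) (q : Fin d → ℕ → ℕ) (x : Fin d → ℕ) : Fin d → ℕ :=
  fun r => cumSum (q r) (x r)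

section PhiSection

variable {n d N : ℕ} {q : Fin d → ℕ → ℕ}

lemma Phi_PhiSection (hpos : ∀ r j, 1 ≤ j → j ≤ n → 0 < q r j) {x : Fin d → ℕ}
    (hx : inGrid n d x) : Phi d q (PhiSection d q x) = x :=
  funext fun r => phi_cumSum (hx r).1 (hpos r _ (hx r).1 (hx r).2)

lemma PhiSection_mem_gridF (hpos : ∀ r j, 1 ≤ j → j ≤ n → 0 < q r j)
    (hsum : ∀ r, cumSum (q r) n = N) {x : Fin d → ℕ} (hx : inGrid n d x) :
    PhiSection d q x ∈ gridF N d := by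
  rw [mem_gridF]
  intro r
  have hq := hpos r _ (hx r).1 (hx r).2
  have := cumSum_pred_add (q := q r) (hx r).1
  exact ⟨by unfold PhiSection; omega, (cumSum_mono (q r) (hx r).2).trans (hsum r).le⟩

end PhiSection

section lipschitz

variable {n d N : ℕ} {l u : Fin d → ℕ → ℝ} {q : Fin d → ℕ → ℕ}

lemma memP.comp_Phi_sub_le_mext {g : (Fin d → ℕ) → ℝ} (hg : memP n d l u g)
    (hsum : ∀ r, cumSum (q r) n = N) {v w : Fin d → ℕ} (hv : v ∈ gridF N d)
    (hw : w ∈ gridF N d) : g (Phi d q v) - g (Phi d q w) ≤ mext d l u q v w :=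
  hg.sub_le_qm (mem_gridF.1 (Phi_mem_gridF hsum hv)) (mem_gridF.1 (Phi_mem_gridF hsum hw))

lemma exists_memP_comp_Phi_eq (hpos : ∀ r j, 1 ≤ j → j ≤ n → 0 < q r j)
    (hsum : ∀ r, cumSum (q r) n = N) {h : (Fin d → ℕ) → ℝ}
    (hh : ∀ v ∈ gridF N d, ∀ w ∈ gridF N d, h v - h w ≤ mext d l u q v w) :
    ∃ g, memP n d l u g ∧ ∀ v ∈ gridF N d, g (Phi d q v) = h v := by
  have hsec {x} (hx : inGrid n d x) := PhiSection_mem_gridF hpos hsum hx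
  refine ⟨fun x => h (PhiSection d q x), fun r x hx hxr => ?_, fun v hv => ?_⟩
  · have hx' := inGrid_update hx r (by omega) hxr
    have hup := hh _ (hsec hx') _ (hsec hx)
    have hdown := hh _ (hsec hx) _ (hsec hx')
    rw [mext, Phi_PhiSection hpos hx, Phi_PhiSection hpos hx', qm_update_succ_left] at hup
    rw [mext, Phi_PhiSection hpos hx, Phi_PhiSection hpos hx', qm_update_succ_right] at hdown
    constructor <;> linarith
  · have hΦv := mem_gridF.1 (Phi_mem_gridF hsum hv)
    have hfib : Phi d q (PhiSection d q (Phi d q v)) = Phi d q v := Phi_PhiSection hpos hΦv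
    have h₁ := hh _ (hsec hΦv) _ hv
    have h₂ := hh _ hv _ (hsec hΦv)
    rw [mext, hfib, qm_self] at h₁ h₂
    linarith

end lipschitz

theorem stmt7_general (n d N : ℕ)
    (l u : Fin d → ℕ → ℝ)
    (q : Fin d → ℕ → ℕ)
    (hpos : ∀ r : Fin d, ∀ j : ℕ, 1 ≤ j → j ≤ n → 0 < q r j)
    (hsum : ∀ r : Fin d, ∑ j ∈ Finset.Icc 1 n, q r j = N)
    (p : ℝ)
    (f : (Fin d → ℕ) → ℝ) :
    (∀ g : (Fin d → ℕ) → ℝ, memP n d l u g →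
      ∑ x ∈ gridF n d, (∏ r : Fin d, ((q r (x r) : ℝ) / N)) * |f x - g x| ^ p
        = (1 / (N : ℝ) ^ d) *
            ∑ v ∈ gridF N d, |f (Phi d q v) - g (Phi d q v)| ^ p) ∧
    sInf {s : ℝ | ∃ g : (Fin d → ℕ) → ℝ, memP n d l u g ∧
        s = ∑ x ∈ gridF n d, (∏ r : Fin d, ((q r (x r) : ℝ) / N)) * |f x - g x| ^ p}
      = sInf {s : ℝ | ∃ h : (Fin d → ℕ) → ℝ,
          (∀ v ∈ gridF N d, ∀ w ∈ gridF N d, h v - h w ≤ mext d l u q v w) ∧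
          s = (1 / (N : ℝ) ^ d) * ∑ v ∈ gridF N d, |f (Phi d q v) - h v| ^ p} := by
  have hdist (g : (Fin d → ℕ) → ℝ) := sum_gridF_mul_eq_sum_comp_Phi hsum fun x => |f x - g x| ^ p
  refine ⟨fun g _ => hdist g, congrArg sInf (Set.ext fun s => ⟨?_, ?_⟩)⟩
  · rintro ⟨g, hg, rfl⟩
    exact ⟨g ∘ Phi d q, fun v hv w hw => hg.comp_Phi_sub_le_mext hsum hv hw, hdist g⟩
  · rintro ⟨h, hh, rfl⟩
    obtain ⟨g, hg, hgh⟩ := exists_memP_comp_Phi_eq hpos hsum hh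
    refine ⟨g, hg, ((hdist g).trans ?_).symm⟩
    rw [sum_congr rfl fun v hv => by rw [hgh v hv]]

/-- the bloated-hypergrid reduction preserves `L_p`-distances:
(i) for every `g ∈ P(B)`, the `μ_D`-weighted `p`-th power distance of `f` to `g`
equals the uniform one of `f_ext = f∘Φ` to `g_ext = g∘Φ`; (ii) the infimum over
`g ∈ P(B)` equals the infimum over all `h` on `[N]^d` with
`h(v) − h(w) ≤ m_ext(v,w)`. -/
theorem stmt7 (n d N : ℕ) (hn : 2 ≤ n) (hd : 1 ≤ d) (hN : 1 ≤ N)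
    (l u : Fin d → ℕ → ℝ)
    (hlu : ∀ r : Fin d, ∀ t : ℕ, 1 ≤ t → t + 1 ≤ n → l r t < u r t)
    (q : Fin d → ℕ → ℕ)
    (hpos : ∀ r : Fin d, ∀ j : ℕ, 1 ≤ j → j ≤ n → 0 < q r j)
    (hsum : ∀ r : Fin d, ∑ j ∈ Finset.Icc 1 n, q r j = N)
    (p : ℝ) (hp : 1 ≤ p)
    (f : (Fin d → ℕ) → ℝ) :
    (∀ g : (Fin d → ℕ) → ℝ, memP n d l u g →
      ∑ x ∈ gridF n d, (∏ r : Fin d, ((q r (x r) : ℝ) / N)) * |f x - g x| ^ p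
        = (1 / (N : ℝ) ^ d) *
            ∑ v ∈ gridF N d, |f (Phi d q v) - g (Phi d q v)| ^ p) ∧
    sInf {s : ℝ | ∃ g : (Fin d → ℕ) → ℝ, memP n d l u g ∧
        s = ∑ x ∈ gridF n d, (∏ r : Fin d, ((q r (x r) : ℝ) / N)) * |f x - g x| ^ p}
      = sInf {s : ℝ | ∃ h : (Fin d → ℕ) → ℝ,
          (∀ v ∈ gridF N d, ∀ w ∈ gridF N d, h v - h w ≤ mext d l u q v w) ∧
          s = (1 / (N : ℝ) ^ d) * ∑ v ∈ gridF N d, |f (Phi d q v) - h v| ^ p} :=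
  stmt7_general n d N l u q hpos hsum p f
end

section
/- Let f : [n]^d → ℝ and fix a dimension i. Suppose there are no violations along the i-lines, that is, every pair (x,y) with x_j = y_j for all j ≠ i is not violated. Then there exists a matching M of the violation graph G_f whose weight vs_f(M) equals the maximum weight over all matchings of G_f, and which contains no i-cross pairs, i.e., every pair {x,y} ∈ M satisfies x_i = y_i. -/
/-!
Orient each pair of a matching so that its score is `f x - f y - qm x y`. This relaxes a matching
to a set of ordered pairs in which no point is twice a first entry or twice a second entry.
A cross pair `(x, y)` of such a set is removed by an exchange process. Let `x'` be `x` moved along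
its `i`-line to the level of `y`. Since `qm` splits exactly over coordinates and there is no
violation along `i`-lines, `x' → y` scores at least as much as `x → y`. If `x'` already heads a
pair `(x', z)`, the triangle inequality lets `(x, y), (x', z)` be replaced by `(x', y), (x, z)`,
and the process continues with the pending pair `(x, z)`, now moving `z` to the level of `x`:
the same step for the reversed pairs. Each original pair is consumed at most once, so this
terminates with one cross pair fewer. A set without cross pairs is finally shortcut along
chains `x → y → z` (triangle inequality again) into a matching without cross pairs, of no smaller
weight; applied to a maximum matching, this gives the theorem.
-/

open Finset

/-- The violation score of a pair `(x,y)` for the function `f`. -/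
def vs (d : ℕ) (l u : Fin d → ℕ → ℝ) (f : (Fin d → ℕ) → ℝ) (x y : Fin d → ℕ) : ℝ :=
  max (f x - f y - qm d l u x y) (f y - f x - qm d l u y x)

/-- A matching of the violation graph `G_f`: a finite set of violated pairs of
grid points in which each point of the hypergrid occurs at most once. -/
def IsMatching (n d : ℕ) (l u : Fin d → ℕ → ℝ) (f : (Fin d → ℕ) → ℝ)
    (M : Finset ((Fin d → ℕ) × (Fin d → ℕ))) : Prop :=
  (∀ p ∈ M, inGrid n d p.1 ∧ inGrid n d p.2 ∧ p.1 ≠ p.2 ∧ 0 < vs d l u f p.1 p.2) ∧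
  (∀ p ∈ M, ∀ p' ∈ M, p ≠ p' →
    p.1 ≠ p'.1 ∧ p.1 ≠ p'.2 ∧ p.2 ≠ p'.1 ∧ p.2 ≠ p'.2)

open Function

namespace ViolationMatching

abbrev Point (d : ℕ) := Fin d → ℕ

variable {n d : ℕ} {l u : Fin d → ℕ → ℝ} {f : Point d → ℝ} {i : Fin d}

def IsBoundingFamily (n d : ℕ) (l u : Fin d → ℕ → ℝ) : Prop :=
  ∀ r : Fin d, ∀ t : ℕ, 1 ≤ t → t + 1 ≤ n → l r t < u r t

def NoLineViolation (n d : ℕ) (l u : Fin d → ℕ → ℝ) (f : Point d → ℝ) (i : Fin d) : Prop :=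
  ∀ x y : Point d, inGrid n d x → inGrid n d y → (∀ j : Fin d, j ≠ i → x j = y j) →
    vs d l u f x y ≤ 0

lemma sum_Ico_sub_sum_Ico_eq_max {g h : ℕ → ℝ} {a b : ℕ}
    (hle : ∀ t, min a b ≤ t → t < max a b → h t ≤ g t) :
    ∑ t ∈ Ico b a, g t - ∑ t ∈ Ico a b, h t =
      max (∑ t ∈ range a, g t - ∑ t ∈ range b, g t) (∑ t ∈ range a, h t - ∑ t ∈ range b, h t) := by
  rcases le_total a b with hab | hab
  · have : ∑ t ∈ Ico a b, h t ≤ ∑ t ∈ Ico a b, g t :=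
      sum_le_sum fun t ht => hle t (by simp_all) (by simp_all)
    rw [Ico_eq_empty_of_le hab, sum_empty, sum_Ico_eq_sub _ hab, max_eq_right] <;>
      linarith [sum_Ico_eq_sub g hab, sum_Ico_eq_sub h hab]
  · have : ∑ t ∈ Ico b a, h t ≤ ∑ t ∈ Ico b a, g t :=
      sum_le_sum fun t ht => hle t (by simp_all) (by simp_all)
    rw [Ico_eq_empty_of_le hab, sum_empty, sum_Ico_eq_sub _ hab, max_eq_left] <;>
      linarith [sum_Ico_eq_sub g hab, sum_Ico_eq_sub h hab]

lemma max_sub_le_add_max (a b c a' b' c' : ℝ) :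
    max (a - c) (a' - c') ≤ max (a - b) (a' - b') + max (b - c) (b' - c') :=
  max_le (by linarith [le_max_left (a - b) (a' - b'), le_max_left (b - c) (b' - c')])
    (by linarith [le_max_right (a - b) (a' - b'), le_max_right (b - c) (b' - c')])

/-- On the grid, `qm` is a sum of maxima of differences of prefix sums, which makes the
triangle inequality immediate. -/
lemma qm_eq_sum_max (hB : IsBoundingFamily n d l u)
    {x y : Point d} (hx : inGrid n d x) (hy : inGrid n d y) :
    qm d l u x y = ∑ r, max (∑ t ∈ range (x r), u r t - ∑ t ∈ range (y r), u r t)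
      (∑ t ∈ range (x r), l r t - ∑ t ∈ range (y r), l r t) := by
  refine sum_congr rfl fun r _ => sum_Ico_sub_sum_Ico_eq_max fun t h1 h2 => (hB r t ?_ ?_).le
  · exact le_trans (le_min (hx r).1 (hy r).1) h1
  · exact lt_of_lt_of_le h2 (max_le (hx r).2 (hy r).2)

lemma qm_le_add (hB : IsBoundingFamily n d l u)
    {x y z : Point d} (hx : inGrid n d x) (hy : inGrid n d y) (hz : inGrid n d z) :
    qm d l u x z ≤ qm d l u x y + qm d l u y z := by
  rw [qm_eq_sum_max hB hx hz, qm_eq_sum_max hB hx hy, qm_eq_sum_max hB hy hz,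
    ← sum_add_distrib]
  gcongr with r
  exact max_sub_le_add_max _ _ _ _ _ _

@[simp] lemma qm_self (x : Point d) : qm d l u x x = 0 := by simp [qm]

lemma qm_eq_add_of_forall_eq_or_eq {x y z : Point d} (hz : ∀ r, z r = x r ∨ z r = y r) :
    qm d l u x y = qm d l u x z + qm d l u z y := by
  simp only [qm, ← sum_add_distrib]
  refine sum_congr rfl fun r _ => ?_
  rcases hz r with h | h <;> simp [h]

def gain (l u : Fin d → ℕ → ℝ) (f : Point d → ℝ) (x y : Point d) : ℝ :=
  f x - f y - qm d l u x y

lemma gain_le_vs (x y : Point d) : gain l u f x y ≤ vs d l u f x y := le_max_left _ _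

@[simp] lemma gain_self (x : Point d) : gain l u f x x = 0 := by simp [gain]

lemma gain_add_gain_le (hB : IsBoundingFamily n d l u) {x y z : Point d} (hx : inGrid n d x)
    (hy : inGrid n d y) (hz : inGrid n d z) :
    gain l u f x y + gain l u f y z ≤ gain l u f x z := by
  have := qm_le_add hB hx hy hz (l := l) (u := u)
  simp only [gain]
  linarith

lemma qm_neg (x y : Point d) : qm d (-u) (-l) x y = qm d l u y x := by
  simp only [qm, Pi.neg_apply, sum_neg_distrib]
  exact sum_congr rfl fun r _ => by ring

lemma gain_neg (x y : Point d) : gain (-u) (-l) (-f) x y = gain l u f y x := by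
  simp only [gain, qm_neg, Pi.neg_apply]
  ring

lemma vs_neg (x y : Point d) : vs d (-u) (-l) (-f) x y = vs d l u f x y := by
  simp only [vs, ← gain.eq_def, gain_neg]
  exact max_comm _ _

lemma IsBoundingFamily.neg (hB : IsBoundingFamily n d l u) : IsBoundingFamily n d (-u) (-l) :=
  fun r t h1 h2 => neg_lt_neg (hB r t h1 h2)

lemma NoLineViolation.neg (hV : NoLineViolation n d l u f i) :
    NoLineViolation n d (-u) (-l) (-f) i := fun x y hx hy hxy =>
  (vs_neg x y).trans_le (hV x y hx hy hxy)

lemma inGrid_update {x y : Point d} (hx : inGrid n d x) (hy : inGrid n d y) (i : Fin d) :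
    inGrid n d (update x i (y i)) := by
  intro r
  rcases eq_or_ne r i with rfl | h
  · simpa using hy r
  · simpa [h] using hx r

lemma gain_eq_add_update (x y : Point d) (i : Fin d) :
    gain l u f x y = gain l u f x (update x i (y i)) + gain l u f (update x i (y i)) y := by
  have hsplit : qm d l u x y = qm d l u x (update x i (y i)) + qm d l u (update x i (y i)) y :=
    qm_eq_add_of_forall_eq_or_eq fun r => by rcases eq_or_ne r i with rfl | h <;> simp [*]
  simp only [gain, hsplit]
  ring

lemma gain_le_gain_update (hV : NoLineViolation n d l u f i) {x y : Point d}
    (hx : inGrid n d x) (hy : inGrid n d y) :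
    gain l u f x y ≤ gain l u f (update x i (y i)) y := by
  have hline : gain l u f x (update x i (y i)) ≤ 0 :=
    (gain_le_vs _ _).trans <| hV _ _ hx (inGrid_update hx hy i) fun j hj => by simp [hj]
  linarith [gain_eq_add_update (l := l) (u := u) (f := f) x y i]

lemma gain_add_gain_le_exchange (hB : IsBoundingFamily n d l u) {x y z : Point d}
    (hx : inGrid n d x) (hy : inGrid n d y) (hz : inGrid n d z) :
    gain l u f x y + gain l u f (update x i (y i)) z ≤
      gain l u f (update x i (y i)) y + gain l u f x z := by
  linarith [gain_eq_add_update (l := l) (u := u) (f := f) x y i,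
    gain_add_gain_le (f := f) hB hx (inGrid_update hx hy i) hz]

section PartialInj

variable {α : Type*} {P Q : Finset (α × α)}

/-- Unlike in a matching, a point may be the first entry of one pair and the second entry of
another. -/
def IsPartialInj (P : Finset (α × α)) : Prop :=
  Set.InjOn Prod.fst (P : Set (α × α)) ∧ Set.InjOn Prod.snd (P : Set (α × α))

lemma IsPartialInj.mono (hP : IsPartialInj P) (hQ : Q ⊆ P) : IsPartialInj Q :=
  ⟨hP.1.mono (coe_subset.2 hQ), hP.2.mono (coe_subset.2 hQ)⟩

variable [DecidableEq α]

lemma IsPartialInj.insert (hP : IsPartialInj P) {x y : α} (hx : x ∉ P.image Prod.fst)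
    (hy : y ∉ P.image Prod.snd) : IsPartialInj (insert (x, y) P) := by
  have hxy : (x, y) ∉ P := fun h => hx (mem_image_of_mem _ h)
  rw [IsPartialInj, coe_insert, Set.injOn_insert (by simpa using hxy),
    Set.injOn_insert (by simpa using hxy)]
  exact ⟨⟨hP.1, by simpa using hx⟩, ⟨hP.2, by simpa using hy⟩⟩

lemma IsPartialInj.image_swap (hP : IsPartialInj P) : IsPartialInj (P.image Prod.swap) := by
  simp only [IsPartialInj, coe_image]
  constructor <;> rintro _ ⟨p, hp, rfl⟩ _ ⟨q, hq, rfl⟩ h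
  exacts [congrArg Prod.swap (hP.2 hp hq h), congrArg Prod.swap (hP.1 hp hq h)]

lemma IsPartialInj.fst_notMem_image_erase (hP : IsPartialInj P) {p : α × α} (hp : p ∈ P) :
    p.1 ∉ (P.erase p).image Prod.fst := by
  simp only [mem_image, mem_erase, not_exists, not_and]
  exact fun q ⟨hqp, hq⟩ hqp' => hqp (hP.1 hq hp hqp')

lemma IsPartialInj.snd_notMem_image_erase (hP : IsPartialInj P) {p : α × α} (hp : p ∈ P) :
    p.2 ∉ (P.erase p).image Prod.snd := by
  simp only [mem_image, mem_erase, not_exists, not_and]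
  exact fun q ⟨hqp, hq⟩ hqp' => hqp (hP.2 hq hp hqp')

@[simp] lemma image_fst_image_swap : (P.image Prod.swap).image Prod.fst = P.image Prod.snd := by
  rw [image_image]; rfl

@[simp] lemma image_snd_image_swap : (P.image Prod.swap).image Prod.snd = P.image Prod.fst := by
  rw [image_image]; rfl

def shortcut (P : Finset (α × α)) (x y z : α) : Finset (α × α) :=
  insert (x, z) ((P.erase (x, y)).erase (y, z))

lemma card_shortcut_lt {x y z : α} (hxy : (x, y) ∈ P) (hyz : (y, z) ∈ P)
    (hne : (x, y) ≠ (y, z)) : #(shortcut P x y z) < #P := by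
  have hyz' : (y, z) ∈ P.erase (x, y) := mem_erase.2 ⟨hne.symm, hyz⟩
  have := card_pos.2 ⟨_, hyz'⟩
  rw [card_erase_of_mem hxy] at this
  refine (card_insert_le _ _).trans_lt ?_
  rw [card_erase_of_mem hyz', card_erase_of_mem hxy]
  omega

namespace IsPartialInj

variable {x y z : α} (hP : IsPartialInj P)
include hP

lemma fst_notMem_image_erase_erase (hxy : (x, y) ∈ P) :
    x ∉ ((P.erase (x, y)).erase (y, z)).image Prod.fst :=
  fun h => hP.fst_notMem_image_erase hxy (image_subset_image (erase_subset _ _) h)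

lemma snd_notMem_image_erase_erase (hyz : (y, z) ∈ P) :
    z ∉ ((P.erase (x, y)).erase (y, z)).image Prod.snd := by
  rw [erase_right_comm]
  exact fun h => hP.snd_notMem_image_erase hyz (image_subset_image (erase_subset _ _) h)

lemma shortcut (hxy : (x, y) ∈ P) (hyz : (y, z) ∈ P) : IsPartialInj (shortcut P x y z) :=
  (hP.mono ((erase_subset _ _).trans (erase_subset _ _))).insert
    (hP.fst_notMem_image_erase_erase hxy) (hP.snd_notMem_image_erase_erase hyz)

end IsPartialInj

end PartialInj

section Relaxation

def weight (l u : Fin d → ℕ → ℝ) (f : Point d → ℝ) (P : Finset (Point d × Point d)) : ℝ :=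
  ∑ p ∈ P, gain l u f p.1 p.2

def crossPairs (i : Fin d) (P : Finset (Point d × Point d)) : Finset (Point d × Point d) :=
  P.filter fun p => p.1 i ≠ p.2 i

def OnGrid (n d : ℕ) (P : Finset (Point d × Point d)) : Prop :=
  ∀ p ∈ P, inGrid n d p.1 ∧ inGrid n d p.2

variable {P C : Finset (Point d × Point d)}

lemma weight_neg_image_swap (P : Finset (Point d × Point d)) :
    weight (-u) (-l) (-f) (P.image Prod.swap) = weight l u f P := by
  rw [weight, sum_image Prod.swap_injective.injOn]
  simp [gain_neg, weight]

lemma weight_insert {p : Point d × Point d} (hp : p ∉ P) :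
    weight l u f (insert p P) = gain l u f p.1 p.2 + weight l u f P :=
  sum_insert hp

lemma weight_erase_add {p : Point d × Point d} (hp : p ∈ P) :
    weight l u f (P.erase p) + gain l u f p.1 p.2 = weight l u f P := by
  rw [weight, weight, add_comm]
  exact add_sum_erase P (fun p => gain l u f p.1 p.2) hp

lemma card_crossPairs_image_swap :
    #(crossPairs i (P.image Prod.swap)) = #(crossPairs i P) := by
  rw [crossPairs, filter_image, card_image_of_injective _ Prod.swap_injective]
  simp [crossPairs, ne_comm]

lemma card_crossPairs_insert_le (P : Finset (Point d × Point d)) (p : Point d × Point d) :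
    #(crossPairs i (insert p P)) ≤ #(crossPairs i P) + 1 := by
  rw [crossPairs, filter_insert]
  split_ifs
  · exact card_insert_le _ _
  · exact Nat.le_succ _

lemma crossPairs_insert_of_eq {p : Point d × Point d} (hp : p.1 i = p.2 i) :
    crossPairs i (insert p P) = crossPairs i P := by
  simp [crossPairs, filter_insert, hp]

lemma crossPairs_erase (p : Point d × Point d) :
    crossPairs i (P.erase p) = (crossPairs i P).erase p :=
  filter_erase _ _ _

lemma OnGrid.image_swap (hP : OnGrid n d P) : OnGrid n d (P.image Prod.swap) := by
  simp only [OnGrid, mem_image, forall_exists_index, and_imp]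
  rintro _ p hp rfl
  exact (hP p hp).symm

lemma OnGrid.insert (hP : OnGrid n d P) {x y : Point d} (hx : inGrid n d x) (hy : inGrid n d y) :
    OnGrid n d (insert (x, y) P) := by
  simp only [OnGrid, mem_insert, forall_eq_or_imp]
  exact ⟨⟨hx, hy⟩, hP⟩

lemma OnGrid.mono (hP : OnGrid n d P) (hC : C ⊆ P) : OnGrid n d C := fun p hp => hP p (hC hp)

lemma weight_le_weight_shortcut (hB : IsBoundingFamily n d l u) (hP : IsPartialInj P)
    (hPg : OnGrid n d P) {x y z : Point d} (hxy : (x, y) ∈ P) (hyz : (y, z) ∈ P)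
    (hne : (x, y) ≠ (y, z)) : weight l u f P ≤ weight l u f (shortcut P x y z) := by
  have hxz : (x, z) ∉ (P.erase (x, y)).erase (y, z) := fun h =>
    hP.fst_notMem_image_erase_erase hxy (mem_image_of_mem Prod.fst h)
  rw [shortcut, weight_insert hxz, ← weight_erase_add hxy,
    ← weight_erase_add (mem_erase.2 ⟨hne.symm, hyz⟩)]
  linarith [gain_add_gain_le (f := f) hB (hPg _ hxy).1 (hPg _ hxy).2 (hPg _ hyz).2]

def redirect (i : Fin d) (P : Finset (Point d × Point d)) (x y z : Point d) :
    Finset (Point d × Point d) :=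
  insert (update x i (y i), y) (P.erase (update x i (y i), z))

/-- State of the exchange process started from a cross pair: `(x, y)` is the pending pair and
`C ⊆ P` the pairs created so far. The twin conditions ensure that the pair consumed by the next
step, the one headed by `x` moved to the level of `y`, never lies in `C` (`notMem_subset`), so
the process stops after at most `#(P \ C)` steps. -/
structure PendingState (i : Fin d) (P C : Finset (Point d × Point d)) (x y : Point d) : Prop where
  partialInj : IsPartialInj P
  fst_notMem : x ∉ P.image Prod.fst
  snd_notMem : y ∉ P.image Prod.snd
  subset : C ⊆ P
  fst_twin : ∀ c ∈ C, c.1 i = y i → update c.1 i (x i) ∈ C.image Prod.fst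
  snd_twin : ∀ c ∈ C, c.2 i = x i →
    update c.2 i (y i) ∈ C.image Prod.snd ∨ update c.2 i (y i) = y

lemma crossPairs_redirect (P : Finset (Point d × Point d)) (x y z : Point d) :
    crossPairs i (redirect i P x y z) = (crossPairs i P).erase (update x i (y i), z) := by
  rw [redirect, crossPairs_insert_of_eq (by simp), crossPairs_erase]

namespace PendingState

variable {x y z : Point d} (hs : PendingState i P C x y)
include hs

lemma notMem_subset (z : Point d) : (update x i (y i), z) ∉ C := fun hc =>
  hs.fst_notMem <| image_subset_image hs.subset <| by simpa using hs.fst_twin _ hc (by simp)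

variable (hz : (update x i (y i), z) ∈ P)
include hz

lemma isPartialInj_redirect : IsPartialInj (redirect i P x y z) :=
  (hs.partialInj.mono (erase_subset _ _)).insert (hs.partialInj.fst_notMem_image_erase hz)
    fun h => hs.snd_notMem (image_subset_image (erase_subset _ _) h)

lemma fst_notMem_redirect : x ∉ (redirect i P x y z).image Prod.fst := by
  have hx' : update x i (y i) ≠ x := fun h => hs.fst_notMem (h ▸ mem_image_of_mem Prod.fst hz)
  simp only [redirect, image_insert, mem_insert, not_or]
  exact ⟨hx'.symm, fun h => hs.fst_notMem (image_subset_image (erase_subset _ _) h)⟩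

lemma snd_notMem_redirect : z ∉ (redirect i P x y z).image Prod.snd := by
  have hzy : z ≠ y := fun h => hs.snd_notMem (h ▸ mem_image_of_mem Prod.snd hz)
  simp only [redirect, image_insert, mem_insert, not_or]
  exact ⟨hzy, hs.partialInj.snd_notMem_image_erase hz⟩

/-- One exchange step: the pending pair becomes `(x, z)`, and the next step, which moves `z` to
the level of `x`, is the same step for the reversed pairs and `(-u, -l, -f)`. -/
lemma next (hzi : z i = y i) :
    PendingState i ((redirect i P x y z).image Prod.swap)
      ((insert (update x i (y i), y) C).image Prod.swap) z x := by
  have hyx : y i ≠ x i := fun h => hs.fst_notMem (by simpa [h] using mem_image_of_mem Prod.fst hz)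
  refine ⟨(hs.isPartialInj_redirect hz).image_swap, by simpa using hs.snd_notMem_redirect hz,
    by simpa using hs.fst_notMem_redirect hz, ?_, ?_, ?_⟩
  · exact image_subset_image (insert_subset_insert _
      (subset_erase.2 ⟨hs.subset, hs.notMem_subset z⟩))
  · rw [image_fst_image_swap, forall_mem_image]
    simp only [Prod.fst_swap, forall_mem_insert, hzi, image_insert]
    refine ⟨fun h => absurd h hyx, fun c hc hci => ?_⟩
    rcases hs.snd_twin c hc hci with h | h
    · exact mem_insert_of_mem h
    · rw [h]
      exact mem_insert_self _ _
  · rw [image_snd_image_swap, forall_mem_image]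
    simp only [Prod.snd_swap, forall_mem_insert, hzi, image_insert]
    refine ⟨fun _ => Or.inr (by simp), fun c hc hci => Or.inl ?_⟩
    exact mem_insert_of_mem (hs.fst_twin c hc hci)

lemma card_sdiff_lt :
    #((redirect i P x y z).image Prod.swap \ (insert (update x i (y i), y) C).image Prod.swap) <
      #(P \ C) := by
  rw [← image_sdiff _ _ Prod.swap_injective, card_image_of_injective _ Prod.swap_injective]
  refine lt_of_le_of_lt (card_le_card fun q hq => ?_)
    (card_erase_lt_of_mem (mem_sdiff.2 ⟨hz, hs.notMem_subset z⟩))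
  simp only [redirect, mem_sdiff, mem_insert, mem_erase, not_or] at hq ⊢
  tauto

lemma weight_redirect :
    weight l u f (redirect i P x y z) + gain l u f (update x i (y i)) z =
      weight l u f P + gain l u f (update x i (y i)) y := by
  have hy : (update x i (y i), y) ∉ P.erase (update x i (y i), z) := fun h =>
    hs.snd_notMem (image_subset_image (erase_subset _ _) (mem_image_of_mem Prod.snd h))
  rw [redirect, weight_insert hy, ← weight_erase_add hz]
  ring

end PendingState

lemma PendingState.of_mem {P : Finset (Point d × Point d)} (hP : IsPartialInj P)
    {p : Point d × Point d} (hp : p ∈ P) : PendingState i (P.erase p) ∅ p.1 p.2 :=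
  ⟨hP.mono (erase_subset _ _), hP.fst_notMem_image_erase hp, hP.snd_notMem_image_erase hp,
    empty_subset _, by simp, by simp⟩

theorem exists_le_weight_of_pendingState (hB : IsBoundingFamily n d l u)
    (hV : NoLineViolation n d l u f i) {P C : Finset (Point d × Point d)} {x y : Point d}
    (hs : PendingState i P C x y) (hP : OnGrid n d P) (hx : inGrid n d x) (hy : inGrid n d y) :
    ∃ P', IsPartialInj P' ∧ OnGrid n d P' ∧ #(crossPairs i P') ≤ #(crossPairs i P) ∧
      weight l u f P + gain l u f x y ≤ weight l u f P' := by
  induction hk : #(P \ C) using Nat.strong_induction_on generalizing l u f P C x y with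
  | _ k ih =>
  set x' := update x i (y i) with hx'_def
  have hx' : inGrid n d x' := inGrid_update hx hy i
  by_cases hfree : x' ∉ P.image Prod.fst
  · have hx'y : (x', y) ∉ P := fun h => hfree (mem_image_of_mem Prod.fst h)
    refine ⟨insert (x', y) P, hs.partialInj.insert hfree hs.snd_notMem, hP.insert hx' hy,
      (congrArg card (crossPairs_insert_of_eq (by simp [hx'_def]))).le, ?_⟩
    rw [weight_insert hx'y]
    linarith [gain_le_gain_update (f := f) hV hx hy]
  obtain ⟨z, hz⟩ : ∃ z, (x', z) ∈ P := by simpa using hfree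
  have hzg : inGrid n d z := (hP _ hz).2
  have hexch := gain_add_gain_le_exchange (f := f) (i := i) hB hx hy hzg
  have hweight := hs.weight_redirect (l := l) (u := u) (f := f) hz
  have hgrid : OnGrid n d (redirect i P x y z) :=
    (hP.mono (erase_subset _ _)).insert hx' hy
  have hcross := crossPairs_redirect (i := i) P x y z
  by_cases hzi : z i = y i
  · obtain ⟨Q, hQ, hQgrid, hQcross, hQweight⟩ := ih _ (hk ▸ hs.card_sdiff_lt hz) hB.neg hV.neg
      (hs.next hz hzi) hgrid.image_swap hzg hx rfl
    have hQswap := weight_neg_image_swap (l := -u) (u := -l) (f := -f) Q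
    simp only [neg_neg] at hQswap
    refine ⟨Q.image Prod.swap, hQ.image_swap, hQgrid.image_swap, ?_, ?_⟩
    · rw [card_crossPairs_image_swap]
      refine hQcross.trans ?_
      rw [card_crossPairs_image_swap, hcross]
      exact card_erase_le
    · rw [weight_neg_image_swap, gain_neg] at hQweight
      linarith
  · refine ⟨insert (x, z) (redirect i P x y z),
      (hs.isPartialInj_redirect hz).insert (hs.fst_notMem_redirect hz)
        (hs.snd_notMem_redirect hz), hgrid.insert hx hzg, ?_, ?_⟩
    · refine (card_crossPairs_insert_le _ _).trans ?_
      have hmem : (x', z) ∈ crossPairs i P :=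
        mem_filter.2 ⟨hz, by simpa [hx'_def] using Ne.symm hzi⟩
      rw [hcross, card_erase_add_one hmem]
    · have hxz : (x, z) ∉ redirect i P x y z := fun h =>
        hs.snd_notMem_redirect hz (mem_image_of_mem Prod.snd h)
      rw [weight_insert hxz]
      linarith

theorem exists_flat_of_isPartialInj (hB : IsBoundingFamily n d l u)
    (hV : NoLineViolation n d l u f i) {P : Finset (Point d × Point d)} (hP : IsPartialInj P)
    (hPg : OnGrid n d P) :
    ∃ P', IsPartialInj P' ∧ OnGrid n d P' ∧ (∀ p ∈ P', p.1 i = p.2 i) ∧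
      weight l u f P ≤ weight l u f P' := by
  induction hc : #(crossPairs i P) using Nat.strong_induction_on generalizing P with
  | _ c ih =>
  obtain hempty | ⟨p, hp⟩ := (crossPairs i P).eq_empty_or_nonempty
  · refine ⟨P, hP, hPg, fun p hp => ?_, le_rfl⟩
    by_contra h
    exact (eq_empty_iff_forall_notMem.1 hempty) p (mem_filter.2 ⟨hp, h⟩)
  have hpP : p ∈ P := mem_of_mem_filter p hp
  obtain ⟨P₁, hP₁, hP₁g, hP₁c, hP₁w⟩ := exists_le_weight_of_pendingState hB hV
    (PendingState.of_mem hP hpP) (hPg.mono (erase_subset _ _)) (hPg p hpP).1 (hPg p hpP).2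
  have hlt : #(crossPairs i P₁) < c := by
    rw [← hc]
    refine lt_of_le_of_lt hP₁c ?_
    rw [crossPairs_erase]
    exact card_erase_lt_of_mem hp
  obtain ⟨P', hP', hP'g, hflat, hw⟩ := ih _ hlt hP₁ hP₁g rfl
  refine ⟨P', hP', hP'g, hflat, ?_⟩
  linarith [weight_erase_add (l := l) (u := u) (f := f) hpP]

lemma isMatching_filter_gain_pos (hP : IsPartialInj P) (hPg : OnGrid n d P)
    (hchain : ∀ p ∈ P, ∀ q ∈ P, p ≠ q → p.2 ≠ q.1) :
    IsMatching n d l u f (P.filter fun p => 0 < gain l u f p.1 p.2) := by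
  refine ⟨fun p hp => ?_, fun p hp q hq hpq => ?_⟩
  · obtain ⟨hpP, hpos⟩ := mem_filter.1 hp
    refine ⟨(hPg p hpP).1, (hPg p hpP).2, fun h => ?_, hpos.trans_le (gain_le_vs _ _)⟩
    rw [h, gain_self] at hpos
    exact lt_irrefl _ hpos
  · have hpP := mem_of_mem_filter p hp
    have hqP := mem_of_mem_filter q hq
    exact ⟨fun h => hpq (hP.1 hpP hqP h), fun h => hchain q hqP p hpP (Ne.symm hpq) h.symm,
      hchain p hpP q hqP hpq, fun h => hpq (hP.2 hpP hqP h)⟩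

lemma weight_le_sum_vs_filter_gain_pos (P : Finset (Point d × Point d)) :
    weight l u f P ≤ ∑ p ∈ P with 0 < gain l u f p.1 p.2, vs d l u f p.1 p.2 :=
  calc weight l u f P
      ≤ ∑ p ∈ P with 0 < gain l u f p.1 p.2, gain l u f p.1 p.2 := by
        rw [weight, ← sum_filter_add_sum_filter_not P (fun p => 0 < gain l u f p.1 p.2)]
        exact add_le_of_nonpos_right (sum_nonpos fun p hp => not_lt.1 (mem_filter.1 hp).2)
    _ ≤ _ := sum_le_sum fun p _ => gain_le_vs _ _

theorem exists_isMatching_of_flat (hB : IsBoundingFamily n d l u)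
    {P : Finset (Point d × Point d)} (hP : IsPartialInj P) (hPg : OnGrid n d P)
    (hflat : ∀ p ∈ P, p.1 i = p.2 i) :
    ∃ N, IsMatching n d l u f N ∧ (∀ p ∈ N, p.1 i = p.2 i) ∧
      weight l u f P ≤ ∑ p ∈ N, vs d l u f p.1 p.2 := by
  induction hc : #P using Nat.strong_induction_on generalizing P with
  | _ c ih =>
  by_cases hchain : ∃ p ∈ P, ∃ q ∈ P, p ≠ q ∧ p.2 = q.1
  · obtain ⟨⟨x, y⟩, hxy, ⟨y', z⟩, hyz, hne, rfl : y = y'⟩ := hchain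
    have hsub : (P.erase (x, y)).erase (y, z) ⊆ P := (erase_subset _ _).trans (erase_subset _ _)
    have hflat' : ∀ p ∈ shortcut P x y z, p.1 i = p.2 i := by
      simp only [shortcut, mem_insert, forall_eq_or_imp]
      exact ⟨(hflat _ hxy).trans (hflat _ hyz), fun r hr => hflat r (hsub hr)⟩
    obtain ⟨N, hN, hNflat, hNw⟩ := ih _ (hc ▸ card_shortcut_lt hxy hyz hne)
      (hP.shortcut hxy hyz) ((hPg.mono hsub).insert (hPg _ hxy).1 (hPg _ hyz).2) hflat' rfl
    exact ⟨N, hN, hNflat, (weight_le_weight_shortcut hB hP hPg hxy hyz hne).trans hNw⟩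
  push Not at hchain
  exact ⟨_, isMatching_filter_gain_pos hP hPg hchain,
    fun p hp => hflat p (mem_of_mem_filter p hp), weight_le_sum_vs_filter_gain_pos P⟩

end Relaxation

noncomputable def orient (l u : Fin d → ℕ → ℝ) (f : Point d → ℝ) (p : Point d × Point d) :
    Point d × Point d :=
  if gain l u f p.2 p.1 ≤ gain l u f p.1 p.2 then p else p.swap

lemma gain_orient (p : Point d × Point d) :
    gain l u f (orient l u f p).1 (orient l u f p).2 = vs d l u f p.1 p.2 := by
  unfold orient
  split_ifs with h
  · exact (max_eq_left h).symm
  · exact (max_eq_right (not_le.1 h).le).symm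

lemma orient_eq_or (p : Point d × Point d) : orient l u f p = p ∨ orient l u f p = p.swap := by
  unfold orient
  split_ifs <;> simp

lemma exists_isMatching_forall_le (n d : ℕ) (l u : Fin d → ℕ → ℝ) (f : Point d → ℝ) :
    ∃ M, IsMatching n d l u f M ∧ ∀ M', IsMatching n d l u f M' →
      ∑ p ∈ M', vs d l u f p.1 p.2 ≤ ∑ p ∈ M, vs d l u f p.1 p.2 := by
  set G := Fintype.piFinset fun _ : Fin d => Icc 1 n
  have hfin : {M | IsMatching n d l u f M}.Finite := by
    refine (G ×ˢ G).powerset.finite_toSet.subset fun M hM => ?_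
    simp only [coe_powerset, Set.mem_preimage, Set.mem_powerset_iff, coe_subset]
    intro p hp
    have hgrid := hM.1 p hp
    simp only [G, mem_product, Fintype.mem_piFinset, mem_Icc]
    exact ⟨hgrid.1, hgrid.2.1⟩
  exact Set.exists_max_image _ (fun M => ∑ p ∈ M, vs d l u f p.1 p.2) hfin
    ⟨∅, by simp [IsMatching]⟩

end ViolationMatching

namespace IsMatching

open ViolationMatching

variable {n d : ℕ} {l u : Fin d → ℕ → ℝ} {f : Point d → ℝ} {M : Finset (Point d × Point d)}
  (hM : IsMatching n d l u f M)
include hM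

lemma eq_of_mem_of_mem {p q : Point d × Point d} (hp : p ∈ M) (hq : q ∈ M)
    (h : p.1 = q.1 ∨ p.1 = q.2 ∨ p.2 = q.1 ∨ p.2 = q.2) : p = q := by
  by_contra hpq
  have := hM.2 p hp q hq hpq
  tauto

lemma eq_of_orient_fst_eq {p q : Point d × Point d} (hp : p ∈ M) (hq : q ∈ M)
    (h : (orient l u f p).1 = (orient l u f q).1) : p = q := by
  refine hM.eq_of_mem_of_mem hp hq ?_
  rcases orient_eq_or (l := l) (u := u) (f := f) p with hp' | hp' <;>
    rcases orient_eq_or (l := l) (u := u) (f := f) q with hq' | hq' <;>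
    simp_all

lemma eq_of_orient_snd_eq {p q : Point d × Point d} (hp : p ∈ M) (hq : q ∈ M)
    (h : (orient l u f p).2 = (orient l u f q).2) : p = q := by
  refine hM.eq_of_mem_of_mem hp hq ?_
  rcases orient_eq_or (l := l) (u := u) (f := f) p with hp' | hp' <;>
    rcases orient_eq_or (l := l) (u := u) (f := f) q with hq' | hq' <;>
    simp_all

lemma isPartialInj_image_orient : IsPartialInj (M.image (orient l u f)) := by
  simp only [IsPartialInj, coe_image]
  constructor <;> rintro _ ⟨p, hp, rfl⟩ _ ⟨q, hq, rfl⟩ h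
  exacts [congrArg _ (hM.eq_of_orient_fst_eq hp hq h),
    congrArg _ (hM.eq_of_orient_snd_eq hp hq h)]

lemma onGrid_image_orient : OnGrid n d (M.image (orient l u f)) := by
  simp only [OnGrid, mem_image, forall_exists_index, and_imp]
  rintro _ p hp rfl
  rcases orient_eq_or (l := l) (u := u) (f := f) p with h | h <;> rw [h]
  exacts [⟨(hM.1 p hp).1, (hM.1 p hp).2.1⟩, ⟨(hM.1 p hp).2.1, (hM.1 p hp).1⟩]

lemma weight_image_orient :
    weight l u f (M.image (orient l u f)) = ∑ p ∈ M, vs d l u f p.1 p.2 := by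
  rw [weight, sum_image fun p hp q hq h => hM.eq_of_orient_fst_eq hp hq (congrArg Prod.fst h)]
  exact sum_congr rfl fun p _ => gain_orient p

end IsMatching

open ViolationMatching

theorem stmt12_general (n d : ℕ)
    (l u : Fin d → ℕ → ℝ)
    (hlu : ∀ r : Fin d, ∀ t : ℕ, 1 ≤ t → t + 1 ≤ n → l r t < u r t)
    (f : (Fin d → ℕ) → ℝ) (i : Fin d)
    (hno : ∀ x y : Fin d → ℕ, inGrid n d x → inGrid n d y →
      (∀ j : Fin d, j ≠ i → x j = y j) → vs d l u f x y ≤ 0) :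
    ∃ M : Finset ((Fin d → ℕ) × (Fin d → ℕ)),
      IsMatching n d l u f M ∧
      (∀ p ∈ M, p.1 i = p.2 i) ∧
      IsGreatest {s : ℝ | ∃ M' : Finset ((Fin d → ℕ) × (Fin d → ℕ)),
          IsMatching n d l u f M' ∧ s = ∑ p ∈ M', vs d l u f p.1 p.2}
        (∑ p ∈ M, vs d l u f p.1 p.2) := by
  obtain ⟨M, hM, hmax⟩ := exists_isMatching_forall_le n d l u f
  obtain ⟨P, hP, hPg, hflat, hPw⟩ :=
    exists_flat_of_isPartialInj hlu hno hM.isPartialInj_image_orient hM.onGrid_image_orient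
  obtain ⟨N, hN, hNflat, hNw⟩ := exists_isMatching_of_flat hlu hP hPg hflat
  refine ⟨N, hN, hNflat, ⟨N, hN, rfl⟩, ?_⟩
  rintro _ ⟨M', hM', rfl⟩
  linarith [hmax M' hM', hM.weight_image_orient]

/-- if there are no violations along the `i`-lines, then some
maximum weight matching of `G_f` has no `i`-cross pairs. -/
theorem stmt12 (n d : ℕ) (hn : 2 ≤ n) (hd : 1 ≤ d)
    (l u : Fin d → ℕ → ℝ)
    (hlu : ∀ r : Fin d, ∀ t : ℕ, 1 ≤ t → t + 1 ≤ n → l r t < u r t)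
    (f : (Fin d → ℕ) → ℝ) (i : Fin d)
    (hno : ∀ x y : Fin d → ℕ, inGrid n d x → inGrid n d y →
      (∀ j : Fin d, j ≠ i → x j = y j) → vs d l u f x y ≤ 0) :
    ∃ M : Finset ((Fin d → ℕ) × (Fin d → ℕ)),
      IsMatching n d l u f M ∧
      (∀ p ∈ M, p.1 i = p.2 i) ∧
      IsGreatest {s : ℝ | ∃ M' : Finset ((Fin d → ℕ) × (Fin d → ℕ)),
          IsMatching n d l u f M' ∧ s = ∑ p ∈ M', vs d l u f p.1 p.2}
        (∑ p ∈ M, vs d l u f p.1 p.2) :=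
  stmt12_general n d l u hlu f i hno
end
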